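/- Define the Q-function Q(x) = (1/√(2π)) ∫_x^∞ exp(−t²/2) dt. For fixed P > 0, P_ASE > 0, η > 0, define for l ∈ {0, …, 4N}, t ∈ {1, 5, 9}: γ_{l,t,N} = P_ASE + (η/(2N+1)³)·(P(2N + 4l + t)/5)³. Then for each fixed t, lim_{N→∞} Σ_{l=0}^{4N} 4^{−2N} C(4N, l) Q(√(P/(5γ_{l,t,N}))) = Q(√((P/5)/(P_ASE + ηP³))). -/

import Mathlib

/-!
With binomial weights `w N l = 2⁻⁴ᴺ C(4N, l)`, points `u N l = (2N + 4l + t)/(2N + 1)` and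
`g u = Q(√(P / (5 (P_ASE + η (P u / 5)³))))`, the sum is `∑ₗ w N l * g (u N l)`, the expectation
of `g(u N L)` for `L ~ Bin(4N, 1/2)`, and the right-hand side is `g 5`. The second central
moment of the binomial law gives `∑ₗ w N l (u N l - 5)² = (16N + (t - 5)²)/(2N + 1)² → 0`.
Since `g` is bounded (by `0 ≤ Q ≤ 1`) and continuous at `5`, the Chebyshev-type bound
`|g u - g 5| ≤ ε + K (u - 5)²` then forces the weighted sums to converge to `g 5`.
-/

open Finset Filter Real

/-- The Gaussian Q-function Q(x) = (1/√(2π)) ∫_x^∞ e^{−t²/2} dt. -/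
noncomputable def gaussQ (x : ℝ) : ℝ :=
  (Real.sqrt (2 * Real.pi))⁻¹ * ∫ u in Set.Ioi x, Real.exp (-u ^ 2 / 2)

open MeasureTheory Topology

theorem continuous_integral_Ioi {E : Type*} [NormedAddCommGroup E] [NormedSpace ℝ E]
    {f : ℝ → E} (hf : Integrable f) : Continuous fun x => ∫ u in Set.Ioi x, f u := by
  have h (x : ℝ) : ∫ u in Set.Ioi x, f u = (∫ u in Set.Ioi 0, f u) - ∫ u in (0)..x, f u := by
    rw [← intervalIntegral.integral_Ioi_sub_Ioi' hf.integrableOn hf.integrableOn, sub_sub_cancel]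
  rw [funext h]
  exact continuous_const.sub (hf.continuous_primitive 0)

theorem integrable_exp_neg_sq_div_two : Integrable fun u : ℝ => exp (-u ^ 2 / 2) := by
  simpa [neg_div, div_eq_inv_mul] using integrable_exp_neg_mul_sq (b := 1 / 2) (by norm_num)

theorem integral_exp_neg_sq_div_two : ∫ u : ℝ, exp (-u ^ 2 / 2) = √(2 * π) := by
  simpa [neg_div, div_eq_inv_mul] using integral_gaussian (1 / 2)

theorem continuous_gaussQ : Continuous gaussQ :=
  continuous_const.mul (continuous_integral_Ioi integrable_exp_neg_sq_div_two)

theorem gaussQ_nonneg (x : ℝ) : 0 ≤ gaussQ x :=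
  mul_nonneg (by positivity) (setIntegral_nonneg measurableSet_Ioi fun _ _ => (exp_pos _).le)

theorem gaussQ_le_one (x : ℝ) : gaussQ x ≤ 1 := by
  have hpos : 0 < √(2 * π) := by positivity
  calc gaussQ x = (√(2 * π))⁻¹ * ∫ u in Set.Ioi x, exp (-u ^ 2 / 2) := rfl
    _ ≤ (√(2 * π))⁻¹ * ∫ u : ℝ, exp (-u ^ 2 / 2) := by
        refine mul_le_mul_of_nonneg_left ?_ (inv_nonneg.2 hpos.le)
        exact setIntegral_le_integral integrable_exp_neg_sq_div_two
          (Eventually.of_forall fun _ => (exp_pos _).le)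
    _ = 1 := by rw [integral_exp_neg_sq_div_two, inv_mul_cancel₀ hpos.ne']

theorem sum_choose_mul_two_mul_sub_add_sq {R : Type*} [CommRing R] (n : ℕ) (c : R) :
    ∑ i ∈ range (n + 1), (n.choose i : R) * (2 * i - n + c) ^ 2 = (n + c ^ 2) * 2 ^ n := by
  induction n with
  | zero => simp
  | succ n ih =>
    have hsum : ∑ i ∈ range (n + 1), (n.choose i : R) = 2 ^ n := by
      rw [← Nat.cast_sum, Nat.sum_range_choose, Nat.cast_pow, Nat.cast_ofNat]
    -- Pascal's rule: each term at rank `n` splits into the shifts `c ∓ 1`.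
    rw [Finset.sum_choose_succ_mul (fun i _ => (2 * i - (n + 1 : ℕ) + c : R) ^ 2),
      ← sum_add_distrib]
    calc ∑ i ∈ range (n + 1), ((n.choose i : R) * (2 * i - (n + 1 : ℕ) + c) ^ 2 +
          (n.choose i : R) * (2 * (i + 1 : ℕ) - (n + 1 : ℕ) + c) ^ 2)
        = ∑ i ∈ range (n + 1), (2 * ((n.choose i : R) * (2 * i - n + c) ^ 2) + 2 * n.choose i) :=
          sum_congr rfl fun i _ => by push_cast; ring
      _ = ((n + 1 : ℕ) + c ^ 2) * 2 ^ (n + 1) := by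
          rw [sum_add_distrib, ← mul_sum, ← mul_sum, ih, hsum]; push_cast; ring

theorem tendsto_inv_two_mul_add_one : Tendsto (fun N : ℕ => ((2 * N + 1 : ℝ))⁻¹) atTop (𝓝 0) :=
  tendsto_inv_atTop_zero.comp <| tendsto_atTop_add_const_right _ 1 <|
    tendsto_natCast_atTop_atTop.const_mul_atTop two_pos

theorem exists_abs_sub_le_add_mul_sq {g : ℝ → ℝ} {x₀ B : ℝ} (hg : ContinuousAt g x₀)
    (hB : ∀ x, |g x - g x₀| ≤ B) {ε : ℝ} (hε : 0 < ε) :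
    ∃ K, ∀ x, |g x - g x₀| ≤ ε + K * (x - x₀) ^ 2 := by
  obtain ⟨δ, hδ, hδg⟩ := Metric.continuousAt_iff.1 hg ε hε
  have hB0 : 0 ≤ B := by simpa using hB x₀
  refine ⟨B / δ ^ 2, fun x => ?_⟩
  by_cases hx : |x - x₀| < δ
  · have := (hδg (by rwa [Real.dist_eq])).le
    rw [Real.dist_eq] at this
    have : 0 ≤ B / δ ^ 2 * (x - x₀) ^ 2 := by positivity
    linarith
  · have hδx : δ ^ 2 ≤ (x - x₀) ^ 2 := by
      rw [← sq_abs (x - x₀)]; gcongr; exact not_lt.1 hx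
    calc |g x - g x₀| ≤ B := hB x
      _ = B / δ ^ 2 * δ ^ 2 := by field_simp
      _ ≤ ε + B / δ ^ 2 * (x - x₀) ^ 2 := by nlinarith [div_nonneg hB0 (sq_nonneg δ)]

theorem tendsto_sum_mul_of_tendsto_sum_mul_sq {α ι : Type*} {L : Filter α} {s : α → Finset ι}
    {w u : α → ι → ℝ} {g : ℝ → ℝ} {x₀ B : ℝ} (hw : ∀ a, ∀ i ∈ s a, 0 ≤ w a i)
    (hw1 : ∀ a, ∑ i ∈ s a, w a i = 1)
    (hu : Tendsto (fun a => ∑ i ∈ s a, w a i * (u a i - x₀) ^ 2) L (𝓝 0))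
    (hg : ContinuousAt g x₀) (hB : ∀ x, |g x - g x₀| ≤ B) :
    Tendsto (fun a => ∑ i ∈ s a, w a i * g (u a i)) L (𝓝 (g x₀)) := by
  rw [Metric.tendsto_nhds]
  intro ε hε
  obtain ⟨K, hK⟩ := exists_abs_sub_le_add_mul_sq hg hB (half_pos hε)
  have hsmall : ∀ᶠ a in L, K * ∑ i ∈ s a, w a i * (u a i - x₀) ^ 2 < ε / 2 :=
    (hu.const_mul K).eventually (gt_mem_nhds (by simpa using half_pos hε))
  filter_upwards [hsmall] with a ha
  rw [Real.dist_eq]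
  calc |∑ i ∈ s a, w a i * g (u a i) - g x₀|
      = |∑ i ∈ s a, w a i * (g (u a i) - g x₀)| := by
        simp only [mul_sub, sum_sub_distrib, ← sum_mul, hw1, one_mul]
    _ ≤ ∑ i ∈ s a, w a i * (ε / 2 + K * (u a i - x₀) ^ 2) := by
        refine (abs_sum_le_sum_abs _ _).trans (sum_le_sum fun i hi => ?_)
        rw [abs_mul, abs_of_nonneg (hw a i hi)]
        exact mul_le_mul_of_nonneg_left (hK _) (hw a i hi)
    _ = ε / 2 + K * ∑ i ∈ s a, w a i * (u a i - x₀) ^ 2 := by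
        simp only [mul_add, sum_add_distrib, ← sum_mul, hw1, one_mul, mul_sum, mul_left_comm]
    _ < ε := by linarith

theorem sum_two_pow_inv_mul_choose (n : ℕ) :
    ∑ l ∈ range (n + 1), ((2 : ℝ) ^ n)⁻¹ * n.choose l = 1 := by
  rw [← mul_sum, ← Nat.cast_sum, Nat.sum_range_choose, Nat.cast_pow, Nat.cast_ofNat,
    inv_mul_cancel₀ (by positivity)]

theorem tendsto_sum_binomial_mul_sq (t : ℝ) :
    Tendsto (fun N : ℕ => ∑ l ∈ range (4 * N + 1),
      ((2 : ℝ) ^ (4 * N))⁻¹ * (4 * N).choose l * ((2 * N + 4 * l + t) / (2 * N + 1) - 5) ^ 2)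
      atTop (𝓝 0) := by
  set c := (t - 5) / 2
  have hsum (N : ℕ) : ∑ l ∈ range (4 * N + 1),
      ((2 : ℝ) ^ (4 * N))⁻¹ * (4 * N).choose l * ((2 * N + 4 * l + t) / (2 * N + 1) - 5) ^ 2 =
        8 * (2 * N + 1 : ℝ)⁻¹ + 4 * (c ^ 2 - 2) * ((2 * N + 1 : ℝ)⁻¹) ^ 2 := by
    have h := sum_choose_mul_two_mul_sub_add_sq (4 * N) c
    have hN : (2 * N + 1 : ℝ) ≠ 0 := by positivity
    calc _ = ((2 : ℝ) ^ (4 * N))⁻¹ * (4 / (2 * N + 1) ^ 2) *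
          ∑ l ∈ range (4 * N + 1), ((4 * N).choose l : ℝ) * (2 * l - (4 * N : ℕ) + c) ^ 2 := by
          rw [mul_sum]
          refine sum_congr rfl fun l _ => ?_
          field_simp
          push_cast
          ring
      _ = _ := by
          rw [h]
          field_simp
          push_cast
          ring
  simp_rw [hsum]
  simpa using (tendsto_inv_two_mul_add_one.const_mul 8).add
    ((tendsto_inv_two_mul_add_one.pow 2).const_mul (4 * (c ^ 2 - 2)))

theorem ber_terms_tendsto_general (P Pase η : ℝ) (hP : 0 < P) (hA : 0 < Pase) (hη : 0 < η)
    (t : ℕ) :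
    Tendsto (fun N : ℕ =>
      ∑ l ∈ Finset.range (4 * N + 1),
        (4 : ℝ) ^ (-(2 * N : ℤ)) * (Nat.choose (4 * N) l : ℝ) *
          gaussQ (Real.sqrt (P / (5 *
            (Pase + η / (2 * N + 1) ^ 3 * (P * (2 * N + 4 * l + t) / 5) ^ 3)))))
      atTop (nhds (gaussQ (Real.sqrt ((P / 5) / (Pase + η * P ^ 3))))) := by
  set g : ℝ → ℝ := fun u => gaussQ (√(P / (5 * (Pase + η * (P * u / 5) ^ 3))))
  have hg5 : g 5 = gaussQ (√((P / 5) / (Pase + η * P ^ 3))) := by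
    simp only [g]; congr 2; field_simp
  have hterm (N l : ℕ) : (4 : ℝ) ^ (-(2 * N : ℤ)) * (Nat.choose (4 * N) l : ℝ) *
      gaussQ (√(P / (5 * (Pase + η / (2 * N + 1) ^ 3 * (P * (2 * N + 4 * l + t) / 5) ^ 3)))) =
        ((2 : ℝ) ^ (4 * N))⁻¹ * (4 * N).choose l * g ((2 * N + 4 * l + t) / (2 * N + 1)) := by
    have h4 : (4 : ℝ) ^ (-(2 * N : ℤ)) = ((2 : ℝ) ^ (4 * N))⁻¹ := by
      rw [zpow_neg, show (4 : ℝ) = 2 ^ 2 by norm_num, ← zpow_natCast, ← zpow_mul]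
      norm_cast
      ring_nf
    simp only [g, h4]
    congr 5
    field_simp
  have hcont : ContinuousAt g 5 := by
    have hden : 5 * (Pase + η * (P * 5 / 5) ^ 3) ≠ 0 := by positivity
    exact continuous_gaussQ.continuousAt.comp <| continuous_sqrt.continuousAt.comp <|
      continuousAt_const.div (by fun_prop) hden
  have hbdd (x : ℝ) : |g x - g 5| ≤ 1 :=
    abs_sub_le_of_nonneg_of_le (gaussQ_nonneg _) (gaussQ_le_one _) (gaussQ_nonneg _)
      (gaussQ_le_one _)
  simp_rw [hterm, ← hg5]
  exact tendsto_sum_mul_of_tendsto_sum_mul_sq (fun N l _ => by positivity)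
    (fun N => sum_two_pow_inv_mul_choose (4 * N)) (tendsto_sum_binomial_mul_sq t) hcont hbdd

/-- Limit as N → ∞ of the binomially averaged BER terms of the finite-memory
GN model equals the regular GN model value. -/
theorem ber_terms_tendsto (P Pase η : ℝ) (hP : 0 < P) (hA : 0 < Pase) (hη : 0 < η)
    (t : ℕ) (ht : t ∈ ({1, 5, 9} : Set ℕ)) :
    Tendsto (fun N : ℕ =>
      ∑ l ∈ Finset.range (4 * N + 1),
        (4 : ℝ) ^ (-(2 * N : ℤ)) * (Nat.choose (4 * N) l : ℝ) *
          gaussQ (Real.sqrt (P / (5 *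
            (Pase + η / (2 * N + 1) ^ 3 * (P * (2 * N + 4 * l + t) / 5) ^ 3)))))
      atTop (nhds (gaussQ (Real.sqrt ((P / 5) / (Pase + η * P ^ 3))))) :=
  ber_terms_tendsto_general P Pase η hP hA hη t
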